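/- Let L be a function algebra on a set I. Then the uniform space Z(L) is supercomplete (its hyperspace H(Z(L)) of closed subsets is complete) if and only if every locally partitionable congruence on L is partitionable. -/

import Mathlib

open scoped Uniformity

/-- `L` is a function algebra on `I` with value type `A`. -/
def IsFnAlg {A I : Type*} (L : Set (I → A)) : Prop :=
  (∀ a : A, (fun _ : I => a) ∈ L) ∧
    ∀ (n : ℕ) (f : (Fin n → A) → A) (g : Fin n → I → A),
      (∀ i, g i ∈ L) → (fun x : I => f fun i => g i x) ∈ L

/-- A homomorphism from the function algebra `L` to `A`. -/
def IsHom {A I : Type*} (L : Set (I → A)) (φ : L → A) : Prop :=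
  (∀ (a : A) (h : (fun _ : I => a) ∈ L), φ ⟨fun _ => a, h⟩ = a) ∧
    ∀ (n : ℕ) (f : (Fin n → A) → A) (g : Fin n → I → A) (hg : ∀ i, g i ∈ L)
      (h : (fun x : I => f fun i => g i x) ∈ L),
      φ ⟨fun x => f fun i => g i x, h⟩ = f fun i => φ ⟨g i, hg i⟩

/-- `Z(L)`: the set of all homomorphisms from `L` to `A`, as a subtype of `A^L`. -/
abbrev Zt {A I : Type*} (L : Set (I → A)) : Type _ := {φ : L → A // IsHom L φ}

/-- `B_A(X)`: the function algebra of all uniformly continuous maps `X → A`. -/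
def BA (A X : Type*) [UniformSpace A] [UniformSpace X] : Set (X → A) :=
  {f : X → A | UniformContinuous f}

/-- A homomorphism between function algebras. -/
def IsAlgHom {A I J : Type*} (L : Set (I → A)) (M : Set (J → A)) (Φ : L → M) : Prop :=
  (∀ (a : A) (h : (fun _ : I => a) ∈ L), ((Φ ⟨fun _ => a, h⟩ : M) : J → A) = fun _ => a) ∧
    ∀ (n : ℕ) (f : (Fin n → A) → A) (g : Fin n → I → A) (hg : ∀ i, g i ∈ L)
      (h : (fun x : I => f fun i => g i x) ∈ L),
      ((Φ ⟨fun x => f fun i => g i x, h⟩ : M) : J → A) =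
        fun y => f fun i => (Φ ⟨g i, hg i⟩ : J → A) y

/-- The kernel of a map `φ : L → A`. -/
def kerOf {A I : Type*} {L : Set (I → A)} (φ : L → A) : Set (L × L) :=
  {p | φ p.1 = φ p.2}

/-- The subalgebra generated by a set `S` of functions. -/
def genBy {A I : Type*} (S : Set (I → A)) : Set (I → A) :=
  ⋂₀ {M : Set (I → A) | IsFnAlg M ∧ S ⊆ M}

/-- A congruence on the function algebra `L`. -/
def IsCongruence {A I : Type*} (L : Set (I → A)) (θ : Set (L × L)) : Prop :=
  Equivalence (fun g h : L => (g, h) ∈ θ) ∧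
    ∀ (n : ℕ) (f : (Fin n → A) → A) (g h : Fin n → L),
      (∀ i, (g i, h i) ∈ θ) →
      ∀ (hg : (fun x : I => f fun i => (g i : I → A) x) ∈ L)
        (hh : (fun x : I => f fun i => (h i : I → A) x) ∈ L),
        ((⟨fun x => f fun i => (g i : I → A) x, hg⟩ : L),
          (⟨fun x => f fun i => (h i : I → A) x, hh⟩ : L)) ∈ θ

/-- The restriction `θ ∩ (N × N)` of a congruence to a subalgebra `N ⊆ L`. -/
def restrictCong {A I : Type*} {L N : Set (I → A)} (hNL : N ⊆ L) (θ : Set (L × L)) :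
    Set (N × N) :=
  {p | ((⟨p.1.1, hNL p.1.2⟩ : L), (⟨p.2.1, hNL p.2.2⟩ : L)) ∈ θ}

/-- A partitionable congruence: an intersection of kernels of homomorphisms into `A`. -/
def IsPartCong {A I : Type*} (L : Set (I → A)) (θ : Set (L × L)) : Prop :=
  IsCongruence L θ ∧ ∃ R : Set (Zt L), θ = ⋂ φ ∈ R, kerOf (φ : Zt L).1

/-- A locally partitionable congruence: its restriction to every finitely generated
subalgebra is partitionable. -/
def IsLocPartCong {A I : Type*} (L : Set (I → A)) (θ : Set (L × L)) : Prop :=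
  IsCongruence L θ ∧
    ∀ (N : Set (I → A)) (hNL : N ⊆ L), (∃ S : Set (I → A), S.Finite ∧ N = genBy S) →
      IsPartCong N (restrictCong hNL θ)

/-- The hyperspace uniformity filter on the set of closed subsets of a uniform space,
generated by the relations `Ē = {(C,D) : C ⊆ E[D] ∧ D ⊆ E[C]}` for entourages `E`. -/
def hyperFil (X : Type*) [UniformSpace X] :
    Filter ({S : Set X // IsClosed S} × {S : Set X // IsClosed S}) :=
  ⨅ E ∈ 𝓤 X, Filter.principal
    {p | (∀ x ∈ p.1.1, ∃ s ∈ p.2.1, (s, x) ∈ E) ∧ ∀ x ∈ p.2.1, ∃ s ∈ p.1.1, (s, x) ∈ E}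


/-! ### Auxiliary development -/

open Filter Set

namespace Stmt18Aux

variable {A I : Type*}

/-! #### Generated subalgebras -/

theorem isFnAlg_genBy (S : Set (I → A)) : IsFnAlg (genBy S) := by
  constructor
  · intro a M hM
    exact hM.1.1 a
  · intro n f g hg M hM
    exact hM.1.2 n f g (fun i => hg i M hM)

theorem subset_genBy (S : Set (I → A)) : S ⊆ genBy S :=
  fun _ hg M hM => hM.2 hg

theorem genBy_subset {S M : Set (I → A)} (hM : IsFnAlg M) (hSM : S ⊆ M) : genBy S ⊆ M :=
  fun _ hg => hg M ⟨hM, hSM⟩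

theorem genBy_mono {S T : Set (I → A)} (hST : S ⊆ T) : genBy S ⊆ genBy T :=
  fun _ hg M hM => hg M ⟨hM.1, hST.trans hM.2⟩

/-- A fixed enumeration of a finset of functions. -/
noncomputable def eF (F : Finset (I → A)) : Fin F.card → (I → A) :=
  fun i => (F.equivFin.symm i : {x // x ∈ F}).1

theorem eF_mem (F : Finset (I → A)) (i : Fin F.card) : eF F i ∈ F :=
  (F.equivFin.symm i).2

theorem exists_eF {F : Finset (I → A)} {g : I → A} (hg : g ∈ F) : ∃ i, eF F i = g :=
  ⟨F.equivFin ⟨g, hg⟩, by simp [eF]⟩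

theorem mem_genBy_finset_iff (F : Finset (I → A)) (g : I → A) :
    g ∈ genBy (↑F : Set (I → A)) ↔
      ∃ f : (Fin F.card → A) → A, g = fun x => f (fun i => eF F i x) := by
  constructor
  · intro hg
    refine genBy_subset (M := {g | ∃ f : (Fin F.card → A) → A,
        g = fun x => f (fun i => eF F i x)}) ?_ ?_ hg
    · constructor
      · intro a
        exact ⟨fun _ => a, rfl⟩
      · intro n f g hg
        choose ff hff using hg
        refine ⟨fun t => f (fun i => ff i t), ?_⟩
        funext x
        simp only
        congr 1
        funext i
        exact congrFun (hff i) x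
    · intro k hk
      obtain ⟨i, hi⟩ := exists_eF hk
      exact ⟨fun t => t i, by funext x; exact (congrFun hi x).symm⟩
  · rintro ⟨f, rfl⟩
    exact (isFnAlg_genBy _).2 F.card f (fun i => eF F i)
      (fun i => subset_genBy _ (eF_mem F i))

theorem genBy_saturated {F : Finset (I → A)} {g : I → A}
    (hg : g ∈ genBy (↑F : Set (I → A))) {x y : I} (hxy : ∀ k ∈ F, k x = k y) :
    g x = g y := by
  obtain ⟨f, rfl⟩ := (mem_genBy_finset_iff F g).mp hg
  simp only
  congr 1
  funext i
  exact hxy _ (eF_mem F i)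

theorem saturated_mem_genBy [Nonempty A] (F : Finset (I → A)) {g : I → A}
    (hsat : ∀ x y : I, (∀ k ∈ F, k x = k y) → g x = g y) :
    g ∈ genBy (↑F : Set (I → A)) := by
  classical
  refine (mem_genBy_finset_iff F g).mpr
    ⟨fun t => if h : ∃ x : I, (fun i => eF F i x) = t then g h.choose
      else Classical.arbitrary A, ?_⟩
  funext x
  have hx : ∃ x' : I, (fun i => eF F i x') = (fun i => eF F i x) := ⟨x, rfl⟩
  simp only
  rw [dif_pos hx]
  refine hsat x hx.choose fun k hk => ?_
  obtain ⟨i, rfl⟩ := exists_eF hk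
  exact (congrFun hx.choose_spec i).symm

/-! #### Homomorphisms -/

theorem nonempty_I_of_hom {L : Set (I → A)} (hL : IsFnAlg L) {φ : L → A}
    (hφ : IsHom L φ) (hA : ∃ a b : A, a ≠ b) : Nonempty I := by
  by_contra h
  obtain ⟨a, b, hab⟩ := hA
  have hfa : (fun _ : I => a) = fun _ : I => b := funext fun x => absurd ⟨x⟩ h
  have h1 := hφ.1 a (hL.1 a)
  have h2 := hφ.1 b (hL.1 b)
  rw [show (⟨fun _ => a, hL.1 a⟩ : L) = ⟨fun _ => b, hL.1 b⟩ from Subtype.ext hfa] at h1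
  exact hab (h1.symm.trans h2)

theorem hom_realize [Infinite A] {L : Set (I → A)} (hL : IsFnAlg L) {φ : L → A}
    (hφ : IsHom L φ) (n : ℕ) (g : Fin n → I → A) (hg : ∀ i, g i ∈ L) :
    ∃ x : I, ∀ i, φ ⟨g i, hg i⟩ = g i x := by
  classical
  obtain ⟨a, b, hab⟩ := exists_pair_ne A
  have hI := nonempty_I_of_hom hL hφ ⟨a, b, hab⟩
  by_contra h
  push_neg at h
  set t : Fin n → A := fun i => φ ⟨g i, hg i⟩ with ht
  set f : (Fin n → A) → A := fun s => if s = t then a else b with hf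
  have hcomp : (fun x : I => f fun i => g i x) ∈ L := hL.2 n f g hg
  have h1 : φ ⟨fun x => f fun i => g i x, hcomp⟩ = a := by
    rw [hφ.2 n f g hg hcomp]
    exact if_pos rfl
  have heq : (fun x : I => f fun i => g i x) = fun _ => b := by
    funext x
    refine if_neg fun hc => ?_
    obtain ⟨i, hi⟩ := h x
    exact hi (congrFun hc i).symm
  have h2 : φ ⟨fun x => f fun i => g i x, hcomp⟩ = b := by
    rw [show (⟨fun x => f fun i => g i x, hcomp⟩ : L) = ⟨fun _ => b, heq ▸ hcomp⟩
      from Subtype.ext heq]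
    exact hφ.1 b _
  exact hab (h1.symm.trans h2)

theorem hom_realize_finset [Infinite A] {L : Set (I → A)} (hL : IsFnAlg L) {φ : L → A}
    (hφ : IsHom L φ) (F : Finset (I → A)) (hF : ↑F ⊆ L) :
    ∃ x : I, ∀ (g) (hgL : g ∈ L), g ∈ F → φ ⟨g, hgL⟩ = g x := by
  obtain ⟨x, hx⟩ := hom_realize hL hφ F.card (fun i => eF F i) (fun i => hF (eF_mem F i))
  refine ⟨x, fun g hgL hgF => ?_⟩
  obtain ⟨i, hi⟩ := exists_eF hgF
  rw [show (⟨g, hgL⟩ : L) = ⟨eF F i, hF (eF_mem F i)⟩ from Subtype.ext hi.symm, hx i, hi]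

theorem hom_eval_genBy {M : Set (I → A)} {φ : M → A} (hφ : IsHom M φ)
    {F : Finset (I → A)} (hFM : ↑F ⊆ M) {x : I}
    (hx : ∀ (g) (hgM : g ∈ M), g ∈ F → φ ⟨g, hgM⟩ = g x)
    {g : I → A} (hg : g ∈ genBy (↑F : Set (I → A))) (hgM : g ∈ M) :
    φ ⟨g, hgM⟩ = g x := by
  obtain ⟨f, rfl⟩ := (mem_genBy_finset_iff F g).mp hg
  have hmems : ∀ i, eF F i ∈ M := fun i => hFM (eF_mem F i)
  have key := hφ.2 F.card f (fun i => eF F i) hmems hgM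
  calc φ ⟨fun x => f fun i => eF F i x, hgM⟩
      = f fun i => φ ⟨eF F i, hmems i⟩ := key
    _ = f fun i => eF F i x := by
        congr 1
        funext i
        exact hx _ _ (eF_mem F i)

theorem isHom_ev (M : Set (I → A)) (x : I) : IsHom M (fun g => (g : I → A) x) :=
  ⟨fun _ _ => rfl, fun _ _ _ _ _ => rfl⟩

/-! #### The uniformity on `Zt L` -/

section Unif

variable [uA : UniformSpace A]

/-- The basic entourage of `Zt L` given by agreement on a finite set of functions. -/
def entF (L : Set (I → A)) (F : Finset (I → A)) : Set (Zt L × Zt L) :=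
  {p | ∀ (g) (hg : g ∈ L), g ∈ F → p.1.1 ⟨g, hg⟩ = p.2.1 ⟨g, hg⟩}

theorem entF_symm {L : Set (I → A)} {F : Finset (I → A)} {p : Zt L × Zt L}
    (hp : p ∈ entF L F) : (p.2, p.1) ∈ entF L F :=
  fun g hg hgF => (hp g hg hgF).symm

theorem entF_mem (huA : uA = ⊥) (L : Set (I → A)) (F : Finset (I → A)) :
    entF L F ∈ 𝓤 (Zt L) := by
  rw [uniformity_subtype]
  refine mem_comap.mpr ⟨{p : (L → A) × (L → A) | ∀ g : L, (g : I → A) ∈ F → p.1 g = p.2 g},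
    ?_, ?_⟩
  · rw [Pi.uniformity]
    refine mem_iInf_of_iInter (I := {g : L | (g : I → A) ∈ F})
      (Set.Finite.preimage Subtype.val_injective.injOn F.finite_toSet)
      (V := fun g => {p : (L → A) × (L → A) | p.1 g.1 = p.2 g.1}) (fun g => ?_) ?_
    · refine mem_comap.mpr ⟨SetRel.id, ?_, ?_⟩
      · rw [huA, bot_uniformity]
        exact mem_principal_self _
      · intro p hp
        exact hp
    · intro p hp g hgF
      exact mem_iInter.mp hp ⟨g, hgF⟩
  · intro q hq g hg hgF
    exact hq ⟨g, hg⟩ hgF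

theorem exists_entF (huA : uA = ⊥) (L : Set (I → A)) {V : Set (Zt L × Zt L)}
    (hV : V ∈ 𝓤 (Zt L)) : ∃ F : Finset (I → A), ↑F ⊆ L ∧ entF L F ⊆ V := by
  rw [uniformity_subtype] at hV
  obtain ⟨W, hW, hWV⟩ := mem_comap.mp hV
  rw [Pi.uniformity] at hW
  obtain ⟨S, hSfin, Vf, hVf, rfl⟩ := Filter.mem_iInf.mp hW
  classical
  refine ⟨(hSfin.image Subtype.val).toFinset, ?_, ?_⟩
  · intro g hg
    rw [Set.Finite.coe_toFinset] at hg
    obtain ⟨g', _, rfl⟩ := hg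
    exact g'.2
  · intro p hp
    refine hWV ?_
    show (p.1.1, p.2.1) ∈ ⋂ i : ↥S, Vf i
    refine mem_iInter.mpr fun g => ?_
    rw [huA, bot_uniformity] at hVf
    obtain ⟨t, ht, htV⟩ := mem_comap.mp (hVf g)
    refine htV ?_
    have hgmem : ((g : L) : I → A) ∈ (hSfin.image Subtype.val).toFinset := by
      rw [Set.Finite.mem_toFinset]
      exact ⟨g.1, g.2, rfl⟩
    have heq : p.1.1 g.1 = p.2.1 g.1 := by
      have := hp (g.1 : L).1 (g.1 : L).2 hgmem
      exact this
    have : (p.1.1 g.1, p.2.1 g.1) ∈ (SetRel.id : SetRel A A) := heq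
    exact mem_principal.mp ht this

theorem isClosed_det (huA : uA = ⊥) (L : Set (I → A)) (F : Finset (I → A))
    {U : Set (Zt L)}
    (h : ∀ p : Zt L × Zt L, p ∈ entF L F → p.1 ∈ U → p.2 ∈ U) : IsClosed U := by
  rw [← isOpen_compl_iff, isOpen_iff_ball_subset]
  intro ψ hψ
  refine ⟨entF L F, entF_mem huA L F, fun χ hχ hcU => ?_⟩
  exact hψ (h (χ, ψ) (entF_symm hχ) hcU)

end Unif

/-! #### The hyperspace filter -/

section Hyper

variable (X : Type*) [UniformSpace X]

/-- The basic relation on the hyperspace associated to an entourage. -/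
def PEset (E : Set (X × X)) :
    Set ({S : Set X // IsClosed S} × {S : Set X // IsClosed S}) :=
  {p | (∀ x ∈ p.1.1, ∃ s ∈ p.2.1, (s, x) ∈ E) ∧ ∀ x ∈ p.2.1, ∃ s ∈ p.1.1, (s, x) ∈ E}

variable {X}

theorem PEset_mono {E E' : Set (X × X)} (h : E ⊆ E') : PEset X E ⊆ PEset X E' := by
  rintro p ⟨h1, h2⟩
  exact ⟨fun x hx => (h1 x hx).imp fun s hs => ⟨hs.1, h hs.2⟩,
    fun x hx => (h2 x hx).imp fun s hs => ⟨hs.1, h hs.2⟩⟩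

theorem hyperFil_eq : hyperFil X = ⨅ E ∈ 𝓤 X, 𝓟 (PEset X E) := rfl

theorem mem_hyperFil {V : Set ({S : Set X // IsClosed S} × {S : Set X // IsClosed S})} :
    V ∈ hyperFil X ↔ ∃ E ∈ 𝓤 X, PEset X E ⊆ V := by
  haveI : Nonempty {E : Set (X × X) // E ∈ 𝓤 X} := ⟨⟨univ, univ_mem⟩⟩
  rw [hyperFil_eq, iInf_subtype', mem_iInf_of_directed]
  · simp only [mem_principal, Subtype.exists, exists_prop]
  · rintro ⟨E1, hE1⟩ ⟨E2, hE2⟩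
    exact ⟨⟨E1 ∩ E2, inter_mem hE1 hE2⟩,
      principal_mono.mpr (PEset_mono inter_subset_left),
      principal_mono.mpr (PEset_mono inter_subset_right)⟩

theorem PEset_mem_hyperFil {E : Set (X × X)} (hE : E ∈ 𝓤 X) : PEset X E ∈ hyperFil X :=
  mem_hyperFil.mpr ⟨E, hE, subset_rfl⟩

end Hyper

/-! #### Families of point sets and their congruences -/

/-- A coherent family of "partial hom" point sets indexed by finsets. -/
def FamOK (L : Set (I → A)) (SI : Finset (I → A) → Set I) : Prop :=
  (∀ F F' : Finset (I → A), F ⊆ F' → SI F' ⊆ SI F) ∧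
    ∀ F F' : Finset (I → A), ↑F' ⊆ L → F ⊆ F' →
      ∀ x ∈ SI F, ∃ y ∈ SI F', ∀ g ∈ F, g x = g y

/-- The congruence induced by a family of point sets. -/
def famCong (L : Set (I → A)) (SI : Finset (I → A) → Set I) : Set (L × L) :=
  {p | ∀ F : Finset (I → A), ↑F ⊆ L →
    (p.1 : I → A) ∈ genBy (↑F : Set (I → A)) → (p.2 : I → A) ∈ genBy (↑F : Set (I → A)) →
    ∀ x ∈ SI F, (p.1 : I → A) x = (p.2 : I → A) x}

section Fam

variable {L : Set (I → A)} {SI : Finset (I → A) → Set I}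

theorem famCong_single (hOK : FamOK L SI) {F : Finset (I → A)} (hF : ↑F ⊆ L)
    {g h : L} (hg : (g : I → A) ∈ genBy (↑F : Set (I → A)))
    (hh : (h : I → A) ∈ genBy (↑F : Set (I → A))) :
    (g, h) ∈ famCong L SI ↔ ∀ x ∈ SI F, (g : I → A) x = (h : I → A) x := by
  constructor
  · intro hm x hx
    exact hm F hF hg hh x hx
  · intro hc F' hF' hg' hh' x hx
    classical
    obtain ⟨y, hy, hagree⟩ := hOK.2 F' (F' ∪ F)
      (by rw [Finset.coe_union]; exact union_subset hF' hF) Finset.subset_union_left x hx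
    have hgx : (g : I → A) x = (g : I → A) y := genBy_saturated hg' hagree
    have hhx : (h : I → A) x = (h : I → A) y := genBy_saturated hh' hagree
    have hyF : y ∈ SI F := hOK.1 F (F' ∪ F) Finset.subset_union_right hy
    rw [hgx, hhx]
    exact hc y hyF

theorem famCong_isCong (hL : IsFnAlg L) (hOK : FamOK L SI) :
    IsCongruence L (famCong L SI) := by
  classical
  constructor
  · constructor
    · intro g F hF _ _ x _
      rfl
    · intro g h hgh F hF hg hh x hx
      exact (hgh F hF hh hg x hx).symm
    · intro g h k hgh hhk F hF hgF hkF x hx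
      set F' := insert (h : I → A) F with hF'def
      have hFsub : F ⊆ F' := Finset.subset_insert _ _
      have hF' : ↑F' ⊆ L := by
        rw [hF'def, Finset.coe_insert]
        exact insert_subset h.2 hF
      obtain ⟨y, hy, hagr⟩ := hOK.2 F F' hF' hFsub x hx
      have e1 : (g : I → A) x = (g : I → A) y := genBy_saturated hgF hagr
      have e4 : (k : I → A) x = (k : I → A) y := genBy_saturated hkF hagr
      have hgF' : (g : I → A) ∈ genBy (↑F' : Set (I → A)) :=
        genBy_mono (Finset.coe_subset.mpr hFsub) hgF
      have hkF' : (k : I → A) ∈ genBy (↑F' : Set (I → A)) :=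
        genBy_mono (Finset.coe_subset.mpr hFsub) hkF
      have hhF' : (h : I → A) ∈ genBy (↑F' : Set (I → A)) :=
        subset_genBy _ (by rw [hF'def]; simp)
      have e2 : (g : I → A) y = (h : I → A) y := hgh F' hF' hgF' hhF' y hy
      have e3 : (h : I → A) y = (k : I → A) y := hhk F' hF' hhF' hkF' y hy
      rw [e1, e2, e3, ← e4]
  · intro n f g h hrel hgc hhc F hF hgF hhF x hx
    set F' := F ∪ Finset.image (fun i => ((g i : I → A))) Finset.univ
      ∪ Finset.image (fun i => ((h i : I → A))) Finset.univ with hF'def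
    have hFsub : F ⊆ F' := by
      rw [hF'def]
      exact Finset.subset_union_left.trans Finset.subset_union_left
    have hF' : ↑F' ⊆ L := by
      intro k hk
      have hk' : k ∈ F' := hk
      rw [hF'def] at hk'
      rcases Finset.mem_union.mp hk' with h1 | h2
      · rcases Finset.mem_union.mp h1 with h3 | h4
        · exact hF h3
        · obtain ⟨i, _, rfl⟩ := Finset.mem_image.mp h4
          exact (g i).2
      · obtain ⟨i, _, rfl⟩ := Finset.mem_image.mp h2
        exact (h i).2
    obtain ⟨y, hy, hagr⟩ := hOK.2 F F' hF' hFsub x hx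
    have e1 : (fun x : I => f fun i => (g i : I → A) x) x
        = (fun x : I => f fun i => (g i : I → A) x) y := genBy_saturated hgF hagr
    have e2 : (fun x : I => f fun i => (h i : I → A) x) x
        = (fun x : I => f fun i => (h i : I → A) x) y := genBy_saturated hhF hagr
    have emid : ∀ i, (g i : I → A) y = (h i : I → A) y := by
      intro i
      refine hrel i F' hF' (subset_genBy _ ?_) (subset_genBy _ ?_) y hy
      · refine Finset.mem_coe.mpr ?_
        rw [hF'def]
        exact Finset.mem_union_left _ (Finset.mem_union_right _
          (Finset.mem_image_of_mem _ (Finset.mem_univ i)))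
      · refine Finset.mem_coe.mpr ?_
        rw [hF'def]
        exact Finset.mem_union_right _ (Finset.mem_image_of_mem _ (Finset.mem_univ i))
    show (fun x : I => f fun i => (g i : I → A) x) x
        = (fun x : I => f fun i => (h i : I → A) x) x
    rw [e1, e2]
    simp only
    congr 1
    funext i
    exact emid i

theorem restrictCong_isCong {N : Set (I → A)} (hNL : N ⊆ L) {θ : Set (L × L)}
    (hθ : IsCongruence L θ) : IsCongruence N (restrictCong hNL θ) := by
  constructor
  · constructor
    · intro g
      exact hθ.1.refl _
    · intro g h hgh
      exact hθ.1.symm hgh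
    · intro g h k hgh hhk
      exact hθ.1.trans hgh hhk
  · intro n f g h hrel hgc hhc
    exact hθ.2 n f (fun i => ⟨(g i : I → A), hNL (g i).2⟩)
      (fun i => ⟨(h i : I → A), hNL (h i).2⟩) (fun i => hrel i) (hNL hgc) (hNL hhc)

theorem famCong_locPart [Infinite A] (hL : IsFnAlg L) (hOK : FamOK L SI) :
    IsLocPartCong L (famCong L SI) := by
  classical
  refine ⟨famCong_isCong hL hOK, ?_⟩
  rintro N hNL ⟨S, hSfin, rfl⟩
  set F₀ := hSfin.toFinset with hF₀def
  have hcoe : (↑F₀ : Set (I → A)) = S := hSfin.coe_toFinset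
  have hF₀L : ↑F₀ ⊆ L := by
    rw [hcoe]
    exact (subset_genBy S).trans hNL
  refine ⟨restrictCong_isCong hNL (famCong_isCong hL hOK), ?_⟩
  refine ⟨{ψ : Zt (genBy S) | ∃ x ∈ SI F₀,
    ∀ (g) (hgN : g ∈ genBy S), ψ.1 ⟨g, hgN⟩ = g x}, ?_⟩
  have hmm : ∀ k : ↥(genBy S), (k : I → A) ∈ genBy (↑F₀ : Set (I → A)) := by
    intro k
    rw [hcoe]
    exact k.2
  ext p
  constructor
  · intro hp
    refine mem_iInter₂.mpr fun ψ hψ => ?_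
    obtain ⟨x, hx, hev⟩ := hψ
    show ψ.1 p.1 = ψ.1 p.2
    rw [show p.1 = (⟨p.1.1, p.1.2⟩ : ↥(genBy S)) from rfl, hev p.1.1 p.1.2,
      show p.2 = (⟨p.2.1, p.2.2⟩ : ↥(genBy S)) from rfl, hev p.2.1 p.2.2]
    exact (famCong_single hOK hF₀L (hmm p.1) (hmm p.2)).mp hp x hx
  · intro hp
    show ((⟨p.1.1, hNL p.1.2⟩ : L), (⟨p.2.1, hNL p.2.2⟩ : L)) ∈ famCong L SI
    refine (famCong_single hOK hF₀L (hmm p.1) (hmm p.2)).mpr ?_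
    intro x hx
    have hmem : (⟨fun g => (g : I → A) x, isHom_ev (genBy S) x⟩ : Zt (genBy S)) ∈
        {ψ : Zt (genBy S) | ∃ x ∈ SI F₀, ∀ (g) (hgN : g ∈ genBy S), ψ.1 ⟨g, hgN⟩ = g x} :=
      ⟨x, hx, fun g hgN => rfl⟩
    exact mem_iInter₂.mp hp _ hmem

theorem famCong_thread [Infinite A] (hL : IsFnAlg L) (hOK : FamOK L SI) (φ : Zt L)
    (hker : ∀ p ∈ famCong L SI, φ.1 p.1 = φ.1 p.2) (F : Finset (I → A)) (hF : ↑F ⊆ L) :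
    ∃ x ∈ SI F, ∀ (g) (hgL : g ∈ L), g ∈ F → φ.1 ⟨g, hgL⟩ = g x := by
  classical
  obtain ⟨x₀, hx₀⟩ := hom_realize_finset hL φ.2 F hF
  by_cases hex : ∃ x ∈ SI F, ∀ g ∈ F, g x = g x₀
  · obtain ⟨x, hx, hagr⟩ := hex
    exact ⟨x, hx, fun g hgL hgF => (hx₀ g hgL hgF).trans (hagr g hgF).symm⟩
  · exfalso
    push_neg at hex
    obtain ⟨a, b, hab⟩ := exists_pair_ne A
    set hc : I → A := fun y => if ∀ g ∈ F, g y = g x₀ then b else a with hhc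
    have hcgen : hc ∈ genBy (↑F : Set (I → A)) := by
      refine saturated_mem_genBy F fun y z hyz => ?_
      rw [hhc]
      simp only
      by_cases H : ∀ g ∈ F, g y = g x₀
      · rw [if_pos H, if_pos fun g hg => (hyz g hg).symm.trans (H g hg)]
      · rw [if_neg H, if_neg fun H' => H fun g hg => (hyz g hg).trans (H' g hg)]
    have hcL : hc ∈ L := genBy_subset hL hF hcgen
    have hcongm : ((⟨fun _ => a, hL.1 a⟩ : L), (⟨hc, hcL⟩ : L)) ∈ famCong L SI := by
      refine (famCong_single hOK hF ((isFnAlg_genBy _).1 a) hcgen).mpr ?_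
      intro x hx
      obtain ⟨g, hgF, hgne⟩ := hex x hx
      show a = hc x
      rw [hhc]
      simp only
      rw [if_neg fun H => hgne (H g hgF)]
    have h1 := hker _ hcongm
    have h2 : φ.1 ⟨fun _ => a, hL.1 a⟩ = a := φ.2.1 a _
    have h3 : φ.1 ⟨hc, hcL⟩ = hc x₀ := hom_eval_genBy φ.2 hF hx₀ hcgen hcL
    have h4 : hc x₀ = b := by
      rw [hhc]
      simp
    exact hab (h2.symm.trans (h1.trans (h3.trans h4)))

end Fam

end Stmt18Aux

open Stmt18Aux in
/-- `Z(L)` is supercomplete — i.e. its hyperspace `H(Z(L))` of closed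
subsets is complete for the hyperspace uniformity (every Cauchy filter on `H(Z(L))`
converges) — if and only if every locally partitionable congruence on `L` is
partitionable. -/
theorem stmt18 {A I : Type*} [Infinite A] [uA : UniformSpace A] (huA : uA = ⊥)
    (L : Set (I → A)) (hL : IsFnAlg L) :
    (∀ f : Filter {S : Set (Zt L) // IsClosed S}, f.NeBot → f ×ˢ f ≤ hyperFil (Zt L) →
        ∃ S : {S : Set (Zt L) // IsClosed S},
          f ≤ (hyperFil (Zt L)).lift' fun V => {T | (S, T) ∈ V}) ↔
      ∀ θ : Set (L × L), IsLocPartCong L θ → IsPartCong L θ := by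
  constructor
  · -- supercompleteness implies locally partitionable → partitionable
    intro Hsc θ hθ
    classical
    set SI : Finset (I → A) → Set I := fun F => {x | ∀ g h : L, (g, h) ∈ θ →
      (g : I → A) ∈ genBy (↑F : Set (I → A)) → (h : I → A) ∈ genBy (↑F : Set (I → A)) →
      (g : I → A) x = (h : I → A) x} with hSIdef
    have P1 : ∀ F : Finset (I → A), ↑F ⊆ L → ∀ g h : L,
        (g : I → A) ∈ genBy (↑F : Set (I → A)) → (h : I → A) ∈ genBy (↑F : Set (I → A)) →
        ((g, h) ∈ θ ↔ ∀ x ∈ SI F, (g : I → A) x = (h : I → A) x) := by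
      intro F hF g h hg hh
      constructor
      · intro hgh x hx
        exact hx g h hgh hg hh
      · intro hc
        have hNL : genBy (↑F : Set (I → A)) ⊆ L := genBy_subset hL hF
        obtain ⟨hcong, R, hR⟩ := hθ.2 (genBy ↑F) hNL ⟨↑F, F.finite_toSet, rfl⟩
        have hRpt : ∀ ψ : Zt (genBy (↑F : Set (I → A))), ψ ∈ R →
            ∃ x ∈ SI F, ∀ (k) (hk : k ∈ genBy (↑F : Set (I → A))), ψ.1 ⟨k, hk⟩ = k x := by
          intro ψ hψ
          obtain ⟨x, hx⟩ := hom_realize_finset (isFnAlg_genBy (↑F : Set (I → A))) ψ.2 F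
            (subset_genBy _)
          have hev : ∀ (k) (hk : k ∈ genBy (↑F : Set (I → A))), ψ.1 ⟨k, hk⟩ = k x :=
            fun k hk => hom_eval_genBy ψ.2 (subset_genBy _) hx hk hk
          refine ⟨x, ?_, hev⟩
          intro g' h' hg'h' hg' hh'
          have hmem : ((⟨(g' : I → A), hg'⟩, ⟨(h' : I → A), hh'⟩) :
              ↥(genBy (↑F : Set (I → A))) × ↥(genBy (↑F : Set (I → A)))) ∈
              restrictCong hNL θ := by
            show ((⟨(g' : I → A), hNL hg'⟩ : L), (⟨(h' : I → A), hNL hh'⟩ : L)) ∈ θ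
            rwa [show (⟨(g' : I → A), hNL hg'⟩ : L) = g' from Subtype.ext rfl,
              show (⟨(h' : I → A), hNL hh'⟩ : L) = h' from Subtype.ext rfl]
          rw [hR] at hmem
          have hker := mem_iInter₂.mp hmem ψ hψ
          have hker' : ψ.1 ⟨(g' : I → A), hg'⟩ = ψ.1 ⟨(h' : I → A), hh'⟩ := hker
          rwa [hev _ hg', hev _ hh'] at hker'
        have hmem2 : ((⟨(g : I → A), hg⟩, ⟨(h : I → A), hh⟩) :
            ↥(genBy (↑F : Set (I → A))) × ↥(genBy (↑F : Set (I → A)))) ∈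
            ⋂ ψ ∈ R, kerOf (ψ : Zt (genBy (↑F : Set (I → A)))).1 := by
          refine mem_iInter₂.mpr fun ψ hψ => ?_
          obtain ⟨x, hx, hev⟩ := hRpt ψ hψ
          show ψ.1 ⟨(g : I → A), hg⟩ = ψ.1 ⟨(h : I → A), hh⟩
          rw [hev _ hg, hev _ hh]
          exact hc x hx
        rw [← hR] at hmem2
        have h3 : ((⟨(g : I → A), hNL hg⟩ : L), (⟨(h : I → A), hNL hh⟩ : L)) ∈ θ := hmem2
        rwa [show (⟨(g : I → A), hNL hg⟩ : L) = g from Subtype.ext rfl,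
          show (⟨(h : I → A), hNL hh⟩ : L) = h from Subtype.ext rfl] at h3
    have hOK : FamOK L SI := by
      constructor
      · intro F F' hFF' x hx g h hgh hg hh
        exact hx g h hgh (genBy_mono (Finset.coe_subset.mpr hFF') hg)
          (genBy_mono (Finset.coe_subset.mpr hFF') hh)
      · intro F F' hF' hFF' x hx
        by_contra hcon
        push_neg at hcon
        obtain ⟨a, b, hab⟩ := exists_pair_ne A
        set hcf : I → A := fun z => if ∀ g ∈ F, g z = g x then b else a with hcfdef
        have hFL : ↑F ⊆ L := (Finset.coe_subset.mpr hFF').trans hF'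
        have hgen : hcf ∈ genBy (↑F : Set (I → A)) := by
          refine saturated_mem_genBy F fun y z hyz => ?_
          rw [hcfdef]
          simp only
          by_cases H : ∀ g ∈ F, g y = g x
          · rw [if_pos H, if_pos fun g hg => (hyz g hg).symm.trans (H g hg)]
          · rw [if_neg H, if_neg fun H' => H fun g hg => (hyz g hg).trans (H' g hg)]
        have hcfL : hcf ∈ L := genBy_subset hL hFL hgen
        have hpair : ((⟨fun _ => a, hL.1 a⟩ : L), (⟨hcf, hcfL⟩ : L)) ∈ θ := by
          refine (P1 F' hF' _ _ (genBy_mono (Finset.coe_subset.mpr hFF')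
            ((isFnAlg_genBy _).1 a)) (genBy_mono (Finset.coe_subset.mpr hFF') hgen)).mpr ?_
          intro y hy
          obtain ⟨g, hgF, hne⟩ := hcon y hy
          show a = hcf y
          rw [hcfdef]
          simp only
          rw [if_neg fun H => hne (H g hgF).symm]
        have hfin : a = hcf x := hx _ _ hpair ((isFnAlg_genBy _).1 a) hgen
        rw [hcfdef] at hfin
        simp at hfin
        exact hab hfin
    set CF : Finset (I → A) → Set (Zt L) := fun F => {φ | ∃ x ∈ SI F,
      ∀ (g) (hgL : g ∈ L), g ∈ F → φ.1 ⟨g, hgL⟩ = g x} with hCFdef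
    have hCFcl : ∀ F, IsClosed (CF F) := by
      intro F
      refine isClosed_det huA L F ?_
      rintro ⟨φ, ψ⟩ hent ⟨x, hx, hev⟩
      exact ⟨x, hx, fun g hgL hgF => (hent g hgL hgF).symm.trans (hev g hgL hgF)⟩
    set B : Finset (I → A) → Set {S : Set (Zt L) // IsClosed S} := fun F =>
      {C | (∀ φ ∈ C.1, φ ∈ CF F) ∧ ∀ x ∈ SI F, ∃ φ ∈ C.1,
        ∀ (g) (hgL : g ∈ L), g ∈ F → φ.1 ⟨g, hgL⟩ = g x} with hBdef
    have hBanti : ∀ F F' : Finset (I → A), ↑F' ⊆ L → F ⊆ F' → B F' ⊆ B F := by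
      intro F F' hF' hFF' C hC
      constructor
      · intro φ hφ
        obtain ⟨x, hx, hev⟩ := hC.1 φ hφ
        exact ⟨x, hOK.1 F F' hFF' hx, fun g hgL hgF => hev g hgL (hFF' hgF)⟩
      · intro x hx
        obtain ⟨y, hy, hagr⟩ := hOK.2 F F' hF' hFF' x hx
        obtain ⟨φ, hφ, hev⟩ := hC.2 y hy
        exact ⟨φ, hφ, fun g hgL hgF => (hev g hgL (hFF' hgF)).trans (hagr g hgF).symm⟩
    have hBself : ∀ F : Finset (I → A), ↑F ⊆ L →
        (⟨CF F, hCFcl F⟩ : {S : Set (Zt L) // IsClosed S}) ∈ B F := by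
      intro F hF
      constructor
      · exact fun φ hφ => hφ
      · intro x hx
        exact ⟨⟨fun g => (g : I → A) x, isHom_ev L x⟩,
          ⟨x, hx, fun g hgL hgF => rfl⟩, fun g hgL hgF => rfl⟩
    haveI : Nonempty {F : Finset (I → A) // ↑F ⊆ L} := ⟨⟨∅, by simp⟩⟩
    set fc : Filter {S : Set (Zt L) // IsClosed S} :=
      ⨅ F : {F : Finset (I → A) // ↑F ⊆ L}, 𝓟 (B F.1) with hfcdef
    have hdir : Directed (· ≥ ·)
        (fun F : {F : Finset (I → A) // ↑F ⊆ L} => 𝓟 (B F.1)) := by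
      rintro ⟨F1, hF1⟩ ⟨F2, hF2⟩
      have hsubL : ↑(F1 ∪ F2) ⊆ L := by
        rw [Finset.coe_union]
        exact union_subset hF1 hF2
      exact ⟨⟨F1 ∪ F2, hsubL⟩,
        principal_mono.mpr (hBanti F1 (F1 ∪ F2) hsubL Finset.subset_union_left),
        principal_mono.mpr (hBanti F2 (F1 ∪ F2) hsubL Finset.subset_union_right)⟩
    have hBmem : ∀ F : {F : Finset (I → A) // ↑F ⊆ L}, B F.1 ∈ fc :=
      fun F => mem_iInf_of_mem F (mem_principal_self _)
    haveI hfcne : fc.NeBot := by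
      refine iInf_neBot_of_directed' hdir fun F => ?_
      exact principal_neBot_iff.mpr ⟨_, hBself F.1 F.2⟩
    have hfcC : fc ×ˢ fc ≤ hyperFil (Zt L) := by
      rw [hyperFil_eq]
      refine le_iInf fun E => le_iInf fun hE => ?_
      rw [le_principal_iff]
      obtain ⟨F, hF, hent⟩ := exists_entF huA L hE
      refine mem_of_superset (prod_mem_prod (hBmem ⟨F, hF⟩) (hBmem ⟨F, hF⟩)) ?_
      rintro ⟨C, D⟩ ⟨hC, hD⟩
      refine PEset_mono hent ?_
      constructor
      · intro φ hφ
        obtain ⟨x, hx, hev⟩ := hC.1 φ hφ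
        obtain ⟨ψ, hψ, hev'⟩ := hD.2 x hx
        exact ⟨ψ, hψ, fun g hgL hgF => (hev' g hgL hgF).trans (hev g hgL hgF).symm⟩
      · intro ψ hψ
        obtain ⟨x, hx, hev⟩ := hD.1 ψ hψ
        obtain ⟨φ, hφ, hev'⟩ := hC.2 x hx
        exact ⟨φ, hφ, fun g hgL hgF => (hev' g hgL hgF).trans (hev g hgL hgF).symm⟩
    obtain ⟨Cstar, hconv⟩ := Hsc fc hfcne hfcC
    have hmemf : ∀ V ∈ hyperFil (Zt L), {T | (Cstar, T) ∈ V} ∈ fc := fun V hV =>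
      Filter.le_lift'.mp hconv V hV
    have hCstarB : ∀ F : Finset (I → A), ↑F ⊆ L → Cstar ∈ B F := by
      intro F hF
      have h1 : {T | (Cstar, T) ∈ PEset (Zt L) (entF L F)} ∈ fc :=
        hmemf _ (PEset_mem_hyperFil (entF_mem huA L F))
      obtain ⟨T, hT1, hT2⟩ := Filter.nonempty_of_mem (inter_mem h1 (hBmem ⟨F, hF⟩))
      constructor
      · intro φ hφ
        obtain ⟨ψ, hψ, hent⟩ := hT1.1 φ hφ
        obtain ⟨x, hx, hev⟩ := hT2.1 ψ hψ
        exact ⟨x, hx, fun g hgL hgF => (hent g hgL hgF).symm.trans (hev g hgL hgF)⟩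
      · intro x hx
        obtain ⟨ψ, hψ, hev⟩ := hT2.2 x hx
        obtain ⟨φ, hφ, hent⟩ := hT1.2 ψ hψ
        exact ⟨φ, hφ, fun g hgL hgF => (hent g hgL hgF).trans (hev g hgL hgF)⟩
    refine ⟨hθ.1, Cstar.1, ?_⟩
    ext p
    constructor
    · intro hp
      refine mem_iInter₂.mpr fun φ hφ => ?_
      set F : Finset (I → A) := insert (p.1 : I → A) {(p.2 : I → A)} with hFdef
      have hm1 : (p.1 : I → A) ∈ F := by
        rw [hFdef]
        exact Finset.mem_insert_self _ _
      have hm2 : (p.2 : I → A) ∈ F := by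
        rw [hFdef]
        exact Finset.mem_insert_of_mem (Finset.mem_singleton_self _)
      have hF : ↑F ⊆ L := by
        intro k hk
        have hk' : k ∈ F := hk
        rw [hFdef] at hk'
        rcases Finset.mem_insert.mp hk' with rfl | hk''
        · exact p.1.2
        · rw [Finset.mem_singleton] at hk''
          subst hk''
          exact p.2.2
      obtain ⟨x, hx, hev⟩ := (hCstarB F hF).1 φ hφ
      show φ.1 p.1 = φ.1 p.2
      have e1 : φ.1 p.1 = (p.1 : I → A) x := by
        have := hev (p.1 : I → A) p.1.2 hm1
        rwa [show (⟨(p.1 : I → A), p.1.2⟩ : L) = p.1 from Subtype.ext rfl] at this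
      have e2 : φ.1 p.2 = (p.2 : I → A) x := by
        have := hev (p.2 : I → A) p.2.2 hm2
        rwa [show (⟨(p.2 : I → A), p.2.2⟩ : L) = p.2 from Subtype.ext rfl] at this
      rw [e1, e2]
      exact hx p.1 p.2 hp (subset_genBy _ (Finset.mem_coe.mpr hm1))
        (subset_genBy _ (Finset.mem_coe.mpr hm2))
    · intro hp
      set F : Finset (I → A) := insert (p.1 : I → A) {(p.2 : I → A)} with hFdef
      have hm1 : (p.1 : I → A) ∈ F := by
        rw [hFdef]
        exact Finset.mem_insert_self _ _
      have hm2 : (p.2 : I → A) ∈ F := by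
        rw [hFdef]
        exact Finset.mem_insert_of_mem (Finset.mem_singleton_self _)
      have hF : ↑F ⊆ L := by
        intro k hk
        have hk' : k ∈ F := hk
        rw [hFdef] at hk'
        rcases Finset.mem_insert.mp hk' with rfl | hk''
        · exact p.1.2
        · rw [Finset.mem_singleton] at hk''
          subst hk''
          exact p.2.2
      have hgoal : (p.1, p.2) ∈ θ := by
        refine (P1 F hF p.1 p.2 (subset_genBy _ (Finset.mem_coe.mpr hm1))
          (subset_genBy _ (Finset.mem_coe.mpr hm2))).mpr ?_
        intro x hx
        obtain ⟨φ, hφ, hev⟩ := (hCstarB F hF).2 x hx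
        have hker : φ.1 p.1 = φ.1 p.2 := mem_iInter₂.mp hp φ hφ
        have e1 := hev (p.1 : I → A) p.1.2 hm1
        have e2 := hev (p.2 : I → A) p.2.2 hm2
        rw [show (⟨(p.1 : I → A), p.1.2⟩ : L) = p.1 from Subtype.ext rfl] at e1
        rw [show (⟨(p.2 : I → A), p.2.2⟩ : L) = p.2 from Subtype.ext rfl] at e2
        rw [← e1, ← e2]
        exact hker
      exact hgoal
  · -- locally partitionable → partitionable implies supercompleteness
    intro Hpart f hfne hfC
    classical
    have hMex : ∀ F : Finset (I → A), ∃ M ∈ f,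
        (∀ C ∈ M, ∀ D ∈ M, (C, D) ∈ PEset (Zt L) (entF L F)) ∧ ∃ C, C ∈ M := by
      intro F
      have hP : PEset (Zt L) (entF L F) ∈ f ×ˢ f :=
        hfC (PEset_mem_hyperFil (entF_mem huA L F))
      obtain ⟨M1, hM1, M2, hM2, hsub⟩ := Filter.mem_prod_iff.mp hP
      refine ⟨M1 ∩ M2, inter_mem hM1 hM2, fun C hC D hD => hsub ⟨hC.1, hD.2⟩, ?_⟩
      obtain ⟨C, hC⟩ := Filter.nonempty_of_mem (inter_mem hM1 hM2)
      exact ⟨C, hC⟩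
    choose M hMf hMP C₀ hC₀ using hMex
    set SI' : Finset (I → A) → Set I := fun F => {x | ∃ φ ∈ (C₀ F).1,
      ∀ (g) (hgL : g ∈ L), g ∈ F → φ.1 ⟨g, hgL⟩ = g x} with hSI'def
    have hf1 : ∀ F : Finset (I → A), ∀ T, T ∈ M F → ∀ x : I,
        ((∃ φ ∈ T.1, ∀ (g) (hgL : g ∈ L), g ∈ F → φ.1 ⟨g, hgL⟩ = g x) ↔ x ∈ SI' F) := by
      intro F T hT x
      constructor
      · rintro ⟨φ, hφ, hev⟩
        obtain ⟨ψ, hψ, hent⟩ := (hMP F T hT (C₀ F) (hC₀ F)).1 φ hφ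
        exact ⟨ψ, hψ, fun g hgL hgF => (hent g hgL hgF).trans (hev g hgL hgF)⟩
      · rintro ⟨φ, hφ, hev⟩
        obtain ⟨ψ, hψ, hent⟩ := (hMP F (C₀ F) (hC₀ F) T hT).1 φ hφ
        exact ⟨ψ, hψ, fun g hgL hgF => (hent g hgL hgF).trans (hev g hgL hgF)⟩
    have hcommon : ∀ F F' : Finset (I → A), ∃ T, T ∈ M F ∧ T ∈ M F' := by
      intro F F'
      obtain ⟨T, hT⟩ := Filter.nonempty_of_mem (inter_mem (hMf F) (hMf F'))
      exact ⟨T, hT.1, hT.2⟩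
    have hOK' : FamOK L SI' := by
      constructor
      · intro F F' hFF' x hx
        obtain ⟨T, hTF, hTF'⟩ := hcommon F F'
        obtain ⟨φ, hφ, hev⟩ := (hf1 F' T hTF' x).mpr hx
        exact (hf1 F T hTF x).mp ⟨φ, hφ, fun g hgL hgF => hev g hgL (hFF' hgF)⟩
      · intro F F' hF' hFF' x hx
        obtain ⟨T, hTF, hTF'⟩ := hcommon F F'
        obtain ⟨φ, hφ, hev⟩ := (hf1 F T hTF x).mpr hx
        obtain ⟨y, hy⟩ := hom_realize_finset hL φ.2 F' hF'
        refine ⟨y, (hf1 F' T hTF' y).mp ⟨φ, hφ, hy⟩, fun g hgF => ?_⟩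
        have hgL : g ∈ L := hF' (Finset.mem_coe.mpr (hFF' hgF))
        exact (hev g hgL hgF).symm.trans (hy g hgL (hFF' hgF))
    haveI : Nonempty {F : Finset (I → A) // ↑F ⊆ L} := ⟨⟨∅, by simp⟩⟩
    set Cs : Set (Zt L) := ⋂ F : {F : Finset (I → A) // ↑F ⊆ L},
      {φ | ∃ x ∈ SI' F.1, ∀ (g) (hgL : g ∈ L), g ∈ F.1 → φ.1 ⟨g, hgL⟩ = g x} with hCsdef
    have hCscl : IsClosed Cs := by
      refine isClosed_iInter fun F => isClosed_det huA L F.1 ?_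
      rintro ⟨φ, ψ⟩ hent ⟨x, hx, hev⟩
      exact ⟨x, hx, fun g hgL hgF => (hent g hgL hgF).symm.trans (hev g hgL hgF)⟩
    have hthread : ∀ F : Finset (I → A), ↑F ⊆ L → ∀ x ∈ SI' F,
        ∃ φ ∈ Cs, ∀ (g) (hgL : g ∈ L), g ∈ F → φ.1 ⟨g, hgL⟩ = g x := by
      intro F₀ hF₀ x₀ hx₀
      set SIx : Finset (I → A) → Set I := fun G =>
        {y | y ∈ SI' (G ∪ F₀) ∧ ∀ g ∈ F₀, g y = g x₀} with hSIxdef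
      have hOKx : FamOK L SIx := by
        constructor
        · intro G G' hGG' y hy
          exact ⟨hOK'.1 (G ∪ F₀) (G' ∪ F₀)
            (Finset.union_subset_union hGG' (subset_refl F₀)) hy.1, hy.2⟩
        · intro G G' hG' hGG' y hy
          obtain ⟨y', hy', hagr⟩ := hOK'.2 (G ∪ F₀) (G' ∪ F₀)
            (by rw [Finset.coe_union]; exact union_subset hG' hF₀)
            (Finset.union_subset_union hGG' (subset_refl F₀)) y hy.1
          refine ⟨y', ⟨hy', fun g hg => ?_⟩, fun g hg => hagr g (Finset.mem_union_left _ hg)⟩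
          exact (hagr g (Finset.mem_union_right _ hg)).symm.trans (hy.2 g hg)
      have hx₀' : x₀ ∈ SIx ∅ := by
        refine ⟨?_, fun g _ => rfl⟩
        show x₀ ∈ SI' (∅ ∪ F₀)
        rw [Finset.empty_union]
        exact hx₀
      obtain ⟨_, Rx, hRx⟩ := Hpart (famCong L SIx) (famCong_locPart hL hOKx)
      have hRxne : ∃ ψ : Zt L, ψ ∈ Rx := by
        by_contra hcon
        push_neg at hcon
        obtain ⟨a, b, hab⟩ := exists_pair_ne A
        have hmem : ((⟨fun _ => a, hL.1 a⟩ : L), (⟨fun _ => b, hL.1 b⟩ : L)) ∈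
            famCong L SIx := by
          rw [hRx]
          exact mem_iInter₂.mpr fun ψ hψ => absurd hψ (hcon ψ)
        have hab' : a = b := hmem ∅ (by simp) ((isFnAlg_genBy _).1 a)
          ((isFnAlg_genBy _).1 b) x₀ hx₀'
        exact hab hab'
      obtain ⟨ψ, hψR⟩ := hRxne
      have hker : ∀ p ∈ famCong L SIx, ψ.1 p.1 = ψ.1 p.2 := by
        intro p hp
        rw [hRx] at hp
        exact mem_iInter₂.mp hp ψ hψR
      have hthr := famCong_thread hL hOKx ψ hker
      refine ⟨ψ, ?_, ?_⟩
      · refine mem_iInter.mpr fun G => ?_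
        obtain ⟨y, hy, hev⟩ := hthr G.1 G.2
        exact ⟨y, hOK'.1 G.1 (G.1 ∪ F₀) Finset.subset_union_left hy.1, hev⟩
      · obtain ⟨y, hy, hev⟩ := hthr F₀ hF₀
        intro g hgL hgF
        rw [hev g hgL hgF]
        exact hy.2 g hgF
    refine ⟨⟨Cs, hCscl⟩, ?_⟩
    rw [Filter.le_lift']
    intro V hV
    obtain ⟨E, hE, hPE⟩ := mem_hyperFil.mp hV
    obtain ⟨F, hF, hent⟩ := exists_entF huA L hE
    refine mem_of_superset (hMf F) ?_
    intro T hT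
    show (⟨Cs, hCscl⟩, T) ∈ V
    refine hPE (PEset_mono hent ?_)
    constructor
    · intro φ hφ
      obtain ⟨x, hx, hev⟩ := mem_iInter.mp hφ ⟨F, hF⟩
      obtain ⟨ψ, hψ, hev'⟩ := (hf1 F T hT x).mpr hx
      exact ⟨ψ, hψ, fun g hgL hgF => (hev' g hgL hgF).trans (hev g hgL hgF).symm⟩
    · intro ψ hψ
      obtain ⟨y, hy⟩ := hom_realize_finset hL ψ.2 F hF
      have hySI : y ∈ SI' F := (hf1 F T hT y).mp ⟨ψ, hψ, hy⟩
      obtain ⟨φ, hφ, hev⟩ := hthread F hF y hySI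
      exact ⟨φ, hφ, fun g hgL hgF => (hev g hgL hgF).trans (hy g hgL hgF).symm⟩
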